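/- Let a ∈ ℝ^{2n}, u ∈ ℝ^{2n}. Then for any real number ε > 0, the infimum of (uᵀ ⊗ aᵀ) vec(E) over all matrices E ∈ ℝ^{2×2n} with Frobenius norm ‖E‖_F ≤ √2·ε and of the form E = T(e) for some complex row vector e with ‖e‖₂ ≤ ε, where T(e) = [[Re(e), -Im(e)],[Im(e), Re(e)]], equals -ε·‖u‖·‖a‖. -/

import Mathlib

open Matrix

/-- The real representation `T(e) = [[Re e, -Im e], [Im e, Re e]] ∈ ℝ^{2×2N}` of a
complex row vector `e ∈ ℂ^{1×N}`; columns are indexed by `Fin 2 × Fin N`, where the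
first block of columns carries `(Re eₖ, Im eₖ)` and the second `(-Im eₖ, Re eₖ)`. -/
noncomputable def Treal (N : ℕ) (e : Fin N → ℂ) : Matrix (Fin 2) (Fin 2 × Fin N) ℝ :=
  Matrix.of fun i bk =>
    if i = 0 then (if bk.1 = 0 then (e bk.2).re else -(e bk.2).im)
    else (if bk.1 = 0 then (e bk.2).im else (e bk.2).re)

/-! The functional `e ↦ aᵀ T(e) u` is `e ↦ Re ⟪e, v⟫` for the complex vector
`vₖ = (a₀ u₀ₖ + a₁ u₁ₖ) + i (a₁ u₀ₖ - a₀ u₁ₖ)`, and `‖v‖ = ‖a‖ ‖u‖` because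
`(a₀x + a₁y)² + (a₁x - a₀y)² = (a₀² + a₁²)(x² + y²)`. Since `‖T(e)‖_F = √2 ‖e‖`, the Frobenius
constraint is implied by `‖e‖ ≤ ε`, and by Cauchy–Schwarz the minimum of `Re ⟪e, v⟫` over the
ball of radius `ε` is `-ε ‖v‖`, attained at `e = -(ε / ‖v‖) v`. -/

section RCLike

variable {𝕜 E : Type*} [RCLike 𝕜] [NormedAddCommGroup E] [InnerProductSpace 𝕜 E]

theorem isLeast_re_inner_closedBall (v : E) {ε : ℝ} (hε : 0 ≤ ε) :
    IsLeast {x : ℝ | ∃ e : E, ‖e‖ ≤ ε ∧ x = RCLike.re (inner 𝕜 e v)} (-(ε * ‖v‖)) := by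
  constructor
  · obtain rfl | hv := eq_or_ne v 0
    · exact ⟨0, by simpa using hε, by simp⟩
    have hv' : ‖v‖ ≠ 0 := norm_ne_zero_iff.mpr hv
    refine ⟨((-(ε / ‖v‖) : ℝ) : 𝕜) • v, ?_, ?_⟩
    · rw [norm_smul, RCLike.norm_ofReal, abs_neg, abs_div, abs_norm, abs_of_nonneg hε,
        div_mul_cancel₀ ε hv']
    · rw [inner_smul_real_left, RCLike.smul_re, inner_self_eq_norm_sq]
      field_simp
  · rintro x ⟨e, he, rfl⟩
    calc -(ε * ‖v‖) ≤ -(‖e‖ * ‖v‖) := by gcongr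
      _ ≤ -‖inner 𝕜 e v‖ := neg_le_neg (norm_inner_le_norm e v)
      _ ≤ RCLike.re (inner 𝕜 e v) := neg_le_of_abs_le (RCLike.abs_re_le_norm _)

end RCLike

noncomputable def trealDual (N : ℕ) (a : EuclideanSpace ℝ (Fin 2))
    (u : EuclideanSpace ℝ (Fin 2 × Fin N)) : EuclideanSpace ℂ (Fin N) :=
  WithLp.toLp 2 fun k => ⟨a 0 * u (0, k) + a 1 * u (1, k), a 1 * u (0, k) - a 0 * u (1, k)⟩

theorem dotProduct_Treal_mulVec (N : ℕ) (a : EuclideanSpace ℝ (Fin 2))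
    (u : EuclideanSpace ℝ (Fin 2 × Fin N)) (e : EuclideanSpace ℂ (Fin N)) :
    (fun i => a i) ⬝ᵥ (Treal N e).mulVec (fun j => u j) =
      (inner ℂ e (trealDual N a u)).re := by
  simp only [dotProduct, Matrix.mulVec, Treal, Matrix.of_apply, Fin.sum_univ_two,
    Fintype.sum_prod_type, trealDual, PiLp.inner_apply, Complex.re_sum,
    RCLike.inner_apply, Complex.mul_re, Complex.conj_re, Complex.conj_im, Fin.isValue,
    one_ne_zero, reduceIte, Finset.mul_sum, ← Finset.sum_add_distrib]
  exact Finset.sum_congr rfl fun k _ => by ring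

theorem norm_trealDual (N : ℕ) (a : EuclideanSpace ℝ (Fin 2))
    (u : EuclideanSpace ℝ (Fin 2 × Fin N)) :
    ‖trealDual N a u‖ = ‖a‖ * ‖u‖ := by
  rw [EuclideanSpace.norm_eq, EuclideanSpace.norm_eq a, EuclideanSpace.norm_eq u,
    ← Real.sqrt_mul (by positivity)]
  congr 1
  simp only [Fintype.sum_prod_type, Fin.sum_univ_two, Real.norm_eq_abs, sq_abs, trealDual,
    PiLp.toLp_apply, Complex.sq_norm, Complex.normSq_apply, Finset.mul_sum,
    ← Finset.sum_add_distrib]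
  exact Finset.sum_congr rfl fun k _ => by ring

theorem sqrt_sum_sq_Treal (N : ℕ) (e : EuclideanSpace ℂ (Fin N)) :
    Real.sqrt (∑ i, ∑ j, (Treal N e i j) ^ 2) = Real.sqrt 2 * ‖e‖ := by
  have hsum : ∑ i, ∑ j, (Treal N e i j) ^ 2 = 2 * ‖e‖ ^ 2 := by
    rw [EuclideanSpace.norm_eq, Real.sq_sqrt (by positivity)]
    simp only [Treal, Matrix.of_apply, Fin.sum_univ_two, Fintype.sum_prod_type, Fin.isValue,
      one_ne_zero, reduceIte, Complex.sq_norm, Complex.normSq_apply, Finset.mul_sum,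
      ← Finset.sum_add_distrib]
    exact Finset.sum_congr rfl fun k _ => by ring
  rw [hsum, Real.sqrt_mul zero_le_two, Real.sqrt_sq (norm_nonneg e)]

theorem stmt_2_general (N : ℕ) (a : EuclideanSpace ℝ (Fin 2))
    (u : EuclideanSpace ℝ (Fin 2 × Fin N)) (ε : ℝ) (hε : 0 < ε) :
    sInf {x : ℝ | ∃ e : EuclideanSpace ℂ (Fin N),
        Real.sqrt (∑ i, ∑ j, (Treal N e i j) ^ 2) ≤ Real.sqrt 2 * ε ∧
        ‖e‖ ≤ ε ∧
        x = (fun i => a i) ⬝ᵥ (Treal N e).mulVec (fun j => u j)} =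
      -ε * ‖u‖ * ‖a‖ := by
  have hset : {x : ℝ | ∃ e : EuclideanSpace ℂ (Fin N),
        Real.sqrt (∑ i, ∑ j, (Treal N e i j) ^ 2) ≤ Real.sqrt 2 * ε ∧
        ‖e‖ ≤ ε ∧
        x = (fun i => a i) ⬝ᵥ (Treal N e).mulVec (fun j => u j)} =
      {x : ℝ | ∃ e : EuclideanSpace ℂ (Fin N), ‖e‖ ≤ ε ∧
        x = RCLike.re (inner ℂ e (trealDual N a u))} := by
    ext x
    simp only [Set.mem_ofPred_eq, sqrt_sum_sq_Treal, dotProduct_Treal_mulVec]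
    constructor
    · rintro ⟨e, -, he, rfl⟩
      exact ⟨e, he, rfl⟩
    · rintro ⟨e, he, rfl⟩
      exact ⟨e, by gcongr, he, rfl⟩
  rw [hset, (isLeast_re_inner_closedBall _ hε.le).csInf_eq, norm_trealDual]
  ring

/-- The infimum of `(uᵀ ⊗ aᵀ) vec(E) = aᵀ E u` over all `E = T(e)` with
`‖E‖_F ≤ √2·ε` and `‖e‖₂ ≤ ε` equals `-ε·‖u‖·‖a‖`. -/
theorem stmt_2 (N : ℕ) (a : EuclideanSpace ℝ (Fin 2))
    (u : EuclideanSpace ℝ (Fin 2 × Fin N)) (ε : ℝ) (hε : 0 < ε) (hN : 0 < N) :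
    sInf {x : ℝ | ∃ e : EuclideanSpace ℂ (Fin N),
        Real.sqrt (∑ i, ∑ j, (Treal N e i j) ^ 2) ≤ Real.sqrt 2 * ε ∧
        ‖e‖ ≤ ε ∧
        x = (fun i => a i) ⬝ᵥ (Treal N e).mulVec (fun j => u j)} =
      -ε * ‖u‖ * ‖a‖ :=
  stmt_2_general N a u ε hε
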